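/- Let d ≥ 2, let p ∈ ℂ[z₁^{±1},…,z_d^{±1}] be a non-zero Laurent polynomial with wd(p) ≥ 1, and let λ satisfy 0 < λ ≤ |lead(p)|. Fix (z₁,…,z_{d−1}) ∈ T^{d−1} with |p₁(z₁,…,z_{d−1})| > |lead(p)|^{1/d}·λ^{(d−1)/d}. Then μ_{S¹}({z_d ∈ S¹ : |p(z₁,…,z_{d−1},z_d)| ≤ λ}) ≤ (8·√3/√47) · wd(p) · ( λ / |lead(p)| )^{1/(d·wd(p))}. -/

import Mathlib

open MeasureTheory Real Filter

noncomputable section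

/-- `Laur d` is the Laurent polynomial ring `ℂ[ℤ^d] = ℂ[z₁^{±1},…,z_d^{±1}]`,
realized as the group algebra of `ℤ^d` over `ℂ`. -/
abbrev Laur (d : ℕ) : Type := AddMonoidAlgebra ℂ (Fin d → ℤ)

/-- the coefficient of `z₁^{n₁}⋯z_d^{n_d}` in `p` -/
def coeff {d : ℕ} (p : Laur d) (n : Fin d → ℤ) : ℂ := (AddMonoidAlgebra.coeff p : (Fin d → ℤ) →₀ ℂ) n

/-- the top degree `n⁺` of `p` in the last variable `z_{d}` -/
def topDeg {d : ℕ} (p : Laur (d+1)) : ℤ :=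
  sSup ((fun n : Fin (d+1) → ℤ => n (Fin.last d)) ''
    ((Finsupp.support (AddMonoidAlgebra.coeff p) : Finset (Fin (d+1) → ℤ)) : Set (Fin (d+1) → ℤ)))

/-- the bottom degree `n⁻` of `p` in the last variable `z_{d}` -/
def botDeg {d : ℕ} (p : Laur (d+1)) : ℤ :=
  sInf ((fun n : Fin (d+1) → ℤ => n (Fin.last d)) ''
    ((Finsupp.support (AddMonoidAlgebra.coeff p) : Finset (Fin (d+1) → ℤ)) : Set (Fin (d+1) → ℤ)))

/-- the coefficient `q⁺(p) = q_{n⁺}` of the top power of the last variable: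
a Laurent polynomial in one variable fewer -/
def qplus {d : ℕ} (p : Laur (d+1)) : Laur d :=
  AddMonoidAlgebra.ofCoeff (Finsupp.comapDomain (fun n : Fin d → ℤ => Fin.snoc n (topDeg p))
    (AddMonoidAlgebra.coeff p)
    (fun a _ b _ h => funext fun i => by simpa using congrFun h (Fin.castSucc i)))

/-- the leading coefficient `lead(p) = p_d`, obtained by iterating `q⁺` -/
def lead : {d : ℕ} → Laur d → ℂ
  | 0, p => coeff p 0
  | _+1, p => lead (qplus p)

/-- the width `wd(p) = max{w₀(p),…,w_{d-1}(p)}` where `w_i(p) = w(p_i)` and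
`p_i = q⁺(p_{i-1})` -/
def wd : {d : ℕ} → Laur d → ℤ
  | 0, _ => 0
  | _+1, p => max (topDeg p - botDeg p) (wd (qplus p))

/-- evaluation of a Laurent polynomial at a point of `(ℂ^×)^d` -/
def evalL {d : ℕ} (p : Laur d) (z : Fin d → ℂ) : ℂ :=
  Finsupp.sum (AddMonoidAlgebra.coeff p) fun n a => a * ∏ i, z i ^ n i

/-- the normalized Haar measure on the unit circle `S¹ ⊆ ℂ`, as a measure on `ℂ` -/
def circleMeasure : Measure ℂ :=
  Measure.map (fun x : ℝ => Complex.exp (2 * Real.pi * Complex.I * x))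
    (volume.restrict (Set.Ioc (0:ℝ) 1))

instance : IsProbabilityMeasure circleMeasure := by
  have h1 : IsProbabilityMeasure (volume.restrict (Set.Ioc (0:ℝ) 1)) := by
    constructor
    simp [Real.volume_Ioc]
  exact Measure.isProbabilityMeasure_map
    ((Complex.continuous_exp.comp (continuous_const.mul Complex.continuous_ofReal)).aemeasurable)

/-- the normalized Haar measure on the `d`-torus `T^d`, as a measure on `ℂ^d` -/
def torusMeasure (d : ℕ) : Measure (Fin d → ℂ) := Measure.pi fun _ => circleMeasure

/-- entrywise evaluation of a matrix over `ℂ[ℤ^d]` at a point of the torus -/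
def evalMatrix {d m n : ℕ} (A : Matrix (Fin m) (Fin n) (Laur d)) (z : Fin d → ℂ) :
    Matrix (Fin m) (Fin n) ℂ := fun i j => evalL (A i j) z

/-- the spectral density function of `r_A^{(2)} : L²(ℤ^d)^m → L²(ℤ^d)^n`:
`F_A(λ) = ∫_{T^d} #{i : μ_i(z) ≤ λ²} dμ_{T^d}(z)` where `μ₁(z),…,μ_m(z)` are the
eigenvalues of the positive semidefinite Hermitian matrix `A(z)·A(z)^*` -/
def sdf {d m n : ℕ} (A : Matrix (Fin m) (Fin n) (Laur d)) (lam : ℝ) : ℝ :=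
  ∫ z, ((Finset.univ.filter fun i : Fin m =>
      (Matrix.isHermitian_mul_conjTranspose_self (evalMatrix A z)).eigenvalues i ≤ lam ^ 2).card : ℝ)
    ∂ torusMeasure d

/-- the `L¹`-norm `‖p‖₁` of a Laurent polynomial -/
def norm1 {d : ℕ} (p : Laur d) : ℝ := Finsupp.sum (AddMonoidAlgebra.coeff p) fun _ a => ‖a‖

/-- the `L¹`-norm `‖A‖₁` of a matrix over `ℂ[ℤ^d]`: the maximum of the `L¹`-norms
of its entries -/
def norm1M {d m n : ℕ} (A : Matrix (Fin m) (Fin n) (Laur d)) : ℝ := ⨆ i, ⨆ j, norm1 (A i j)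

/-!
For fixed `w`, `z ↦ z ^ (-n⁻) · p(w, z)` is a polynomial `g` of degree `N = n⁺ - n⁻ ≤ wd p` with
leading coefficient `p₁(w)`. Factoring `g` over `ℂ`, a point with `|g(z)| ≤ λ` lies within
`(λ / |p₁(w)|) ^ (1/N)` of one of the `N` roots, and the part of the unit circle inside a disc of
radius `r` has normalized length at most `r` (Jordan's inequality `|sin πy| ≥ 2|y|`). The hypothesis
on `|p₁(w)|` rearranges to `λ / |p₁(w)| < (λ / |lead p|) ^ (1/d)`; in particular `λ < |p₁(w)|`,
so the set is empty when `N = 0`, and otherwise `λ ≤ |lead p|` and `N ≤ wd p` bound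
`N (λ / |p₁(w)|) ^ (1/N)` by `wd p · (λ / |lead p|) ^ (1/(d · wd p))`.
-/

open Complex in
lemma four_mul_norm_le_norm_toCircle_sub_one (x : UnitAddCircle) :
    4 * ‖x‖ ≤ ‖(x.toCircle : ℂ) - 1‖ := by
  induction x using QuotientAddGroup.induction_on with
  | H a =>
  set y := a - round a
  have hsin : |Real.sin (π * a)| = |Real.sin (π * y)| := by
    rw [show π * a = π * y + round a * π by ring, Real.sin_add_int_mul_pi, abs_mul,
      abs_neg_one_zpow, one_mul]
  have hjordan : 2 * |y| ≤ |Real.sin (π * y)| := by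
    have hy : |y| ≤ 1 / 2 := abs_sub_round a
    have := Real.mul_abs_le_abs_sin (x := π * y)
      (by rw [abs_mul, abs_of_pos pi_pos]; nlinarith [pi_pos])
    rwa [abs_mul, abs_of_pos pi_pos, ← mul_assoc, div_mul_cancel₀ _ pi_ne_zero] at this
  rw [UnitAddCircle.norm_eq, AddCircle.toCircle_apply_mk, Circle.coe_exp,
    show ((2 * π / 1 * a : ℝ) : ℂ) * I = I * ((2 * π * a : ℝ) : ℂ) by push_cast; ring,
    norm_exp_I_mul_ofReal_sub_one, norm_mul, Real.norm_ofNat, Real.norm_eq_abs,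
    show 2 * π * a / 2 = π * a by ring, hsin]
  linarith

lemma four_mul_dist_le_dist_toCircle (u v : UnitAddCircle) :
    4 * dist u v ≤ dist (u.toCircle : ℂ) (v.toCircle : ℂ) := by
  have : (u.toCircle : ℂ) = v.toCircle * (u - v).toCircle := by
    rw [← Circle.coe_mul, ← AddCircle.toCircle_add, add_sub_cancel]
  rw [dist_eq_norm, dist_eq_norm, this, ← mul_sub_one, norm_mul, Circle.norm_coe, one_mul]
  exact four_mul_norm_le_norm_toCircle_sub_one _

lemma circleMeasure_eq_map_toCircle :
    circleMeasure = Measure.map (fun u : UnitAddCircle => (u.toCircle : ℂ)) volume := by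
  have hmk := AddCircle.measurePreserving_mk (1 : ℝ) 0
  rw [zero_add] at hmk
  rw [← hmk.map_eq, Measure.map_map (by fun_prop) hmk.measurable, circleMeasure]
  congr 1
  ext x
  simp [AddCircle.toCircle_apply_mk, Circle.coe_exp]
  ring_nf

lemma circleMeasure_closedBall_le (α : ℂ) (t : ℝ) :
    circleMeasure (Metric.closedBall α t) ≤ ENNReal.ofReal t := by
  set E : UnitAddCircle → ℂ := fun u => u.toCircle
  have hE : Measurable E := by fun_prop
  rw [circleMeasure_eq_map_toCircle, Measure.map_apply hE Metric.isClosed_closedBall.measurableSet]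
  rcases (E ⁻¹' Metric.closedBall α t).eq_empty_or_nonempty with h | ⟨u₀, hu₀⟩
  · simp [h]
  have hsub : E ⁻¹' Metric.closedBall α t ⊆ Metric.closedBall u₀ (t / 2) := fun u hu => by
    have h4 := four_mul_dist_le_dist_toCircle u u₀
    have h2 := dist_triangle_right (E u) (E u₀) α
    rw [Set.mem_preimage, Metric.mem_closedBall] at hu hu₀
    rw [Metric.mem_closedBall]
    linarith
  calc volume (E ⁻¹' Metric.closedBall α t) ≤ volume (Metric.closedBall u₀ (t / 2)) :=
        measure_mono hsub
    _ = ENNReal.ofReal (min 1 t) := by rw [AddCircle.volume_closedBall]; ring_nf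
    _ ≤ ENNReal.ofReal t := ENNReal.ofReal_le_ofReal (min_le_right _ _)

open scoped Polynomial

lemma norm_eval_eq_norm_leadingCoeff_mul_prod (g : ℂ[X]) (z : ℂ) :
    ‖g.eval z‖ = ‖g.leadingCoeff‖ * (g.roots.map fun a => ‖z - a‖).prod := by
  conv_lhs => rw [← Polynomial.C_leadingCoeff_mul_prod_multiset_X_sub_C
    (IsAlgClosed.card_roots_eq_natDegree (p := g))]
  rw [Polynomial.eval_mul, Polynomial.eval_C, norm_mul, Polynomial.eval_multiset_prod,
    Multiset.map_map]
  congr 1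
  have := map_multiset_prod (normHom : ℂ →*₀ ℝ) (g.roots.map fun a => z - a)
  simpa [Multiset.map_map] using this

lemma exists_mem_roots_norm_sub_pow_le (g : ℂ[X]) (hg : 0 < g.natDegree) (z : ℂ) :
    ∃ a ∈ g.roots, ‖z - a‖ ^ g.natDegree ≤ ‖g.eval z‖ / ‖g.leadingCoeff‖ := by
  have hlc : 0 < ‖g.leadingCoeff‖ := by
    simpa using (Polynomial.ne_zero_of_natDegree_gt hg)
  have hne : g.roots.toFinset.Nonempty := by
    rw [Multiset.toFinset_nonempty, ← Multiset.card_pos, IsAlgClosed.card_roots_eq_natDegree]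
    exact hg
  obtain ⟨a, ha, hmin⟩ := g.roots.toFinset.exists_min_image (fun a => ‖z - a‖) hne
  rw [Multiset.mem_toFinset] at ha
  refine ⟨a, ha, ?_⟩
  rw [le_div_iff₀' hlc, norm_eval_eq_norm_leadingCoeff_mul_prod]
  gcongr
  rw [← IsAlgClosed.card_roots_eq_natDegree, ← Multiset.prod_replicate, ← Multiset.map_const']
  exact Multiset.prod_map_le_prod_map₀ _ _ (fun _ _ => norm_nonneg _)
    fun b hb => hmin b (Multiset.mem_toFinset.mpr hb)

lemma circleMeasure_setOf_norm_eval_le (g : ℂ[X]) (hg : 0 < g.natDegree) (lam : ℝ) :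
    circleMeasure {z | ‖g.eval z‖ ≤ lam} ≤
      ENNReal.ofReal (g.natDegree * (lam / ‖g.leadingCoeff‖) ^ (g.natDegree : ℝ)⁻¹) := by
  set r := (lam / ‖g.leadingCoeff‖) ^ (g.natDegree : ℝ)⁻¹
  have hsub : {z | ‖g.eval z‖ ≤ lam} ⊆ ⋃ a ∈ g.roots.toFinset, Metric.closedBall a r := by
    intro z hz
    obtain ⟨a, ha, hza⟩ := exists_mem_roots_norm_sub_pow_le g hg z
    refine Set.mem_biUnion (Multiset.mem_toFinset.mpr ha) ?_
    rw [Metric.mem_closedBall, dist_eq_norm,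
      ← Real.pow_rpow_inv_natCast (norm_nonneg _) hg.ne']
    exact Real.rpow_le_rpow (by positivity)
      (hza.trans (div_le_div_of_nonneg_right hz (norm_nonneg _))) (by positivity)
  calc circleMeasure {z | ‖g.eval z‖ ≤ lam}
      ≤ ∑ a ∈ g.roots.toFinset, circleMeasure (Metric.closedBall a r) :=
        (measure_mono hsub).trans (measure_biUnion_finset_le _ _)
    _ ≤ ∑ _a ∈ g.roots.toFinset, ENNReal.ofReal r :=
        Finset.sum_le_sum fun a _ => circleMeasure_closedBall_le a r
    _ = g.roots.toFinset.card * ENNReal.ofReal r := by rw [Finset.sum_const, nsmul_eq_mul]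
    _ ≤ g.natDegree * ENNReal.ofReal r := by
        gcongr
        exact (Multiset.toFinset_card_le _).trans IsAlgClosed.card_roots_eq_natDegree.le
    _ = ENNReal.ofReal (g.natDegree * r) := by
        rw [ENNReal.ofReal_mul (Nat.cast_nonneg _), ENNReal.ofReal_natCast]

lemma setOf_norm_eval_le_eq_empty {g : ℂ[X]} (hg : g.natDegree = 0) {lam : ℝ}
    (hlam : lam < ‖g.leadingCoeff‖) : {z | ‖g.eval z‖ ≤ lam} = ∅ := by
  rw [Polynomial.eq_C_of_natDegree_eq_zero hg]
  rw [Polynomial.leadingCoeff, hg] at hlam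
  exact Set.eq_empty_of_forall_notMem fun z hz => hlam.not_ge (by simpa using hz)

lemma wd_nonneg : ∀ {d : ℕ} (p : Laur d), 0 ≤ wd p
  | 0, _ => le_rfl
  | _ + 1, p => le_max_of_le_right (wd_nonneg (qplus p))

section Slice

variable {e : ℕ}

lemma lastDegrees_finite (p : Laur (e+1)) :
    ((fun n : Fin (e+1) → ℤ => n (Fin.last e)) ''
      ((AddMonoidAlgebra.coeff p).support : Set (Fin (e+1) → ℤ))).Finite :=
  (Finset.finite_toSet _).image _

lemma le_topDeg (p : Laur (e+1)) {n : Fin (e+1) → ℤ} (hn : n ∈ (AddMonoidAlgebra.coeff p).support) :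
    n (Fin.last e) ≤ topDeg p :=
  le_csSup (lastDegrees_finite p).bddAbove ⟨n, hn, rfl⟩

lemma botDeg_le (p : Laur (e+1)) {n : Fin (e+1) → ℤ} (hn : n ∈ (AddMonoidAlgebra.coeff p).support) :
    botDeg p ≤ n (Fin.last e) :=
  csInf_le (lastDegrees_finite p).bddBelow ⟨n, hn, rfl⟩

lemma coeff_qplus (p : Laur (e+1)) (m : Fin e → ℤ) :
    AddMonoidAlgebra.coeff (qplus p) m = AddMonoidAlgebra.coeff p (Fin.snoc m (topDeg p)) := rfl

lemma evalL_qplus (p : Laur (e+1)) (w : Fin e → ℂ) :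
    evalL (qplus p) w = ∑ n ∈ (AddMonoidAlgebra.coeff p).support with n (Fin.last e) = topDeg p,
      coeff p n * ∏ i, w i ^ n i.castSucc := by
  rw [evalL, Finsupp.sum]
  refine Finset.sum_nbij' (fun m => Fin.snoc m (topDeg p)) Fin.init ?_ ?_ ?_ ?_ ?_
  · intro m hm
    simpa [coeff_qplus] using hm
  · intro n hn
    simp only [Finset.mem_filter, Finsupp.mem_support_iff] at hn
    simpa [coeff_qplus, ← hn.2] using hn.1
  · intro m _
    simp
  · intro n hn
    simp [← (Finset.mem_filter.mp hn).2]
  · intro m _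
    simp [coeff, coeff_qplus]

def slicePoly (p : Laur (e+1)) (w : Fin e → ℂ) : ℂ[X] :=
  ∑ n ∈ (AddMonoidAlgebra.coeff p).support,
    Polynomial.C (coeff p n * ∏ i, w i ^ n i.castSucc) *
      Polynomial.X ^ (n (Fin.last e) - botDeg p).toNat

lemma evalL_snoc_eq_zpow_mul_eval_slicePoly (p : Laur (e+1)) (w : Fin e → ℂ) {z : ℂ} (hz : z ≠ 0) :
    evalL p (Fin.snoc w z) = z ^ botDeg p * (slicePoly p w).eval z := by
  rw [slicePoly, Polynomial.eval_finsetSum, Finset.mul_sum, evalL, Finsupp.sum]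
  refine Finset.sum_congr rfl fun n hn => ?_
  have hpow : z ^ n (Fin.last e) = z ^ botDeg p * z ^ (n (Fin.last e) - botDeg p).toNat := by
    rw [← zpow_natCast, Int.toNat_of_nonneg (sub_nonneg.mpr (botDeg_le p hn)), ← zpow_add₀ hz,
      add_sub_cancel]
  simp only [Fin.prod_univ_castSucc, Fin.snoc_castSucc, Fin.snoc_last, Polynomial.eval_mul,
    Polynomial.eval_C, Polynomial.eval_pow, Polynomial.eval_X, hpow, coeff]
  ring

lemma natDegree_slicePoly_le (p : Laur (e+1)) (w : Fin e → ℂ) :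
    (slicePoly p w).natDegree ≤ (topDeg p - botDeg p).toNat := by
  refine Polynomial.natDegree_sum_le_of_forall_le _ _ fun n hn => ?_
  refine (Polynomial.natDegree_C_mul_le _ _).trans ?_
  rw [Polynomial.natDegree_X_pow]
  have := le_topDeg p hn
  omega

lemma coeff_slicePoly_topDeg (p : Laur (e+1)) (w : Fin e → ℂ) :
    (slicePoly p w).coeff (topDeg p - botDeg p).toNat = evalL (qplus p) w := by
  classical
  simp only [slicePoly, Polynomial.finsetSum_coeff, Polynomial.coeff_C_mul_X_pow]
  rw [← Finset.sum_filter, evalL_qplus]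
  refine Finset.sum_congr (Finset.filter_congr fun n hn => ?_) fun _ _ => rfl
  have := le_topDeg p hn
  have := botDeg_le p hn
  omega

lemma natDegree_slicePoly_le_wd (p : Laur (e+1)) (w : Fin e → ℂ) :
    ((slicePoly p w).natDegree : ℤ) ≤ wd p := by
  have := natDegree_slicePoly_le p w
  have := wd_nonneg (qplus p)
  rw [wd]
  omega

lemma natDegree_slicePoly {p : Laur (e+1)} {w : Fin e → ℂ} (hc : evalL (qplus p) w ≠ 0) :
    (slicePoly p w).natDegree = (topDeg p - botDeg p).toNat :=
  (natDegree_slicePoly_le p w).antisymm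
    (Polynomial.le_natDegree_of_ne_zero (by rwa [coeff_slicePoly_topDeg]))

lemma leadingCoeff_slicePoly {p : Laur (e+1)} {w : Fin e → ℂ} (hc : evalL (qplus p) w ≠ 0) :
    (slicePoly p w).leadingCoeff = evalL (qplus p) w := by
  rw [Polynomial.leadingCoeff, natDegree_slicePoly hc, coeff_slicePoly_topDeg]

lemma setOf_norm_evalL_snoc_le_subset (p : Laur (e+1)) (w : Fin e → ℂ) (lam : ℝ) :
    {z : ℂ | ‖z‖ = 1 ∧ ‖evalL p (Fin.snoc w z)‖ ≤ lam} ⊆ {z | ‖(slicePoly p w).eval z‖ ≤ lam} := by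
  rintro z ⟨hz1, hz⟩
  rwa [evalL_snoc_eq_zpow_mul_eval_slicePoly p w (norm_pos_iff.mp (hz1 ▸ one_pos)),
    norm_mul, norm_zpow, hz1, one_zpow, one_mul] at hz

end Slice

lemma div_lt_rpow_of_rpow_mul_rpow_lt {lam L c θ : ℝ} (hlam : 0 < lam) (hL : 0 < L)
    (h : L ^ θ * lam ^ (1 - θ) < c) : lam / c < (lam / L) ^ θ := by
  have hc : 0 < c := lt_of_le_of_lt (by positivity) h
  rw [Real.div_rpow hlam.le hL.le, div_lt_div_iff₀ hc (by positivity)]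
  calc lam * L ^ θ = lam ^ θ * (L ^ θ * lam ^ (1 - θ)) := by
        rw [mul_left_comm, ← Real.rpow_add hlam, add_sub_cancel, Real.rpow_one, mul_comm]
    _ < lam ^ θ * c := by gcongr

lemma rpow_inv_le_rpow_inv_mul {x y d N W : ℝ} (hx : 0 ≤ x) (hxy : x ≤ y ^ d⁻¹) (hy0 : 0 < y)
    (hy1 : y ≤ 1) (hd : 0 < d) (hN : 0 < N) (hNW : N ≤ W) : x ^ N⁻¹ ≤ y ^ (d * W)⁻¹ :=
  calc x ^ N⁻¹ ≤ (y ^ d⁻¹) ^ N⁻¹ := by gcongr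
    _ = y ^ (d * N)⁻¹ := by rw [← Real.rpow_mul hy0.le, mul_inv]
    _ ≤ y ^ (d * W)⁻¹ := Real.rpow_le_rpow_of_exponent_ge hy0 hy1 (by gcongr)

lemma one_le_eight_mul_sqrt_three_div_sqrt_47 : 1 ≤ 8 * √3 / √47 := by
  rw [one_le_div (by positivity), Real.sqrt_le_iff, mul_pow, Real.sq_sqrt (by norm_num)]
  exact ⟨by positivity, by norm_num⟩

theorem induction_step_second_part_general (e : ℕ) (p : Laur (e+1))
    (lam : ℝ) (h0 : 0 < lam) (hle : lam ≤ ‖lead p‖)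
    (w : Fin e → ℂ)
    (hbig : ‖lead p‖ ^ (((e : ℝ) + 1)⁻¹) * lam ^ ((e : ℝ) / ((e : ℝ) + 1)) <
      ‖evalL (qplus p) w‖) :
    circleMeasure {z : ℂ | ‖z‖ = 1 ∧ ‖evalL p (Fin.snoc w z)‖ ≤ lam} ≤
      ENNReal.ofReal (8 * Real.sqrt 3 / Real.sqrt 47 * (wd p : ℝ) *
        ((lam / ‖lead p‖) ^ ((((e : ℝ) + 1) * (wd p : ℝ))⁻¹))) := by
  set c := evalL (qplus p) w
  have hL : 0 < ‖lead p‖ := h0.trans_le hle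
  have hratio : lam / ‖lead p‖ ≤ 1 := (div_le_one hL).mpr hle
  have hc : lam / ‖c‖ < (lam / ‖lead p‖) ^ ((e : ℝ) + 1)⁻¹ :=
    div_lt_rpow_of_rpow_mul_rpow_lt h0 hL (by convert hbig using 4; field_simp; ring)
  have hc0 : c ≠ 0 := norm_pos_iff.mp ((by positivity : (0 : ℝ) ≤ _).trans_lt hbig)
  have hlc : (slicePoly p w).leadingCoeff = c := leadingCoeff_slicePoly hc0
  refine (measure_mono (setOf_norm_evalL_snoc_le_subset p w lam)).trans ?_
  rcases Nat.eq_zero_or_pos (slicePoly p w).natDegree with hN | hN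
  · have hlam : lam < ‖c‖ := by
      rw [← div_lt_one (norm_pos_iff.mpr hc0)]
      exact hc.trans_le (Real.rpow_le_one (by positivity) hratio (by positivity))
    rw [← hlc] at hlam
    simp [setOf_norm_eval_le_eq_empty hN hlam]
  · refine (circleMeasure_setOf_norm_eval_le _ hN lam).trans (ENNReal.ofReal_le_ofReal ?_)
    have hNwd : ((slicePoly p w).natDegree : ℝ) ≤ wd p := by
      exact_mod_cast natDegree_slicePoly_le_wd p w
    have hwd : (0 : ℝ) ≤ wd p := by exact_mod_cast wd_nonneg p
    rw [hlc, mul_assoc]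
    calc _ ≤ (wd p : ℝ) * (lam / ‖lead p‖) ^ ((((e : ℝ) + 1) * (wd p : ℝ))⁻¹) :=
          mul_le_mul hNwd (rpow_inv_le_rpow_inv_mul (by positivity) hc.le (by positivity) hratio
            (by positivity) (by exact_mod_cast hN) hNwd) (by positivity) hwd
      _ ≤ _ := le_mul_of_one_le_left (by positivity) one_le_eight_mul_sqrt_three_div_sqrt_47

/-- Induction step, second part. Here the total number of variables is `d = e+1 ≥ 2`
and `p₁ = q⁺(p)`. For `0 < λ ≤ |lead(p)|` and a fixed point `w ∈ T^{d−1}` with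
`|p₁(w)| > |lead(p)|^{1/d}·λ^{(d−1)/d}`, the slice measure satisfies
`μ_{S¹}({z_d : |p(w,z_d)| ≤ λ}) ≤ (8√3/√47)·wd(p)·(λ/|lead(p)|)^{1/(d·wd(p))}`. -/
theorem induction_step_second_part (e : ℕ) (he : 1 ≤ e) (p : Laur (e+1)) (hp : p ≠ 0)
    (hwd : 1 ≤ wd p)
    (lam : ℝ) (h0 : 0 < lam) (hle : lam ≤ ‖lead p‖)
    (w : Fin e → ℂ) (hw : ∀ i, ‖w i‖ = 1)
    (hbig : ‖lead p‖ ^ (((e : ℝ) + 1)⁻¹) * lam ^ ((e : ℝ) / ((e : ℝ) + 1)) <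
      ‖evalL (qplus p) w‖) :
    circleMeasure {z : ℂ | ‖z‖ = 1 ∧ ‖evalL p (Fin.snoc w z)‖ ≤ lam} ≤
      ENNReal.ofReal (8 * Real.sqrt 3 / Real.sqrt 47 * (wd p : ℝ) *
        ((lam / ‖lead p‖) ^ ((((e : ℝ) + 1) * (wd p : ℝ))⁻¹))) :=
  induction_step_second_part_general e p lam h0 hle w hbig
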